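/- On any almost contact metric manifold, for all vector fields Y, Z with η(Y) = η(Z) = 0 one has g(hY, Z) − g(hZ, Y) = −(1/2)·(L_ξΦ)(Y,Z) + (1/2)·(L_ξΦ)(φY, φZ); moreover if hφ + φh = 0 this identity holds for all vector fields Y, Z, and on an η-normal manifold with hφ + φh = 0 one has g((∇_ξφ)Y, Z) = g(hY, Z) − g(hZ, Y) for all vector fields Y, Z. -/
import Mathlib


noncomputable section

/-!
An abstract model of smooth geometry: `F` plays the role of the algebra of
smooth real-valued functions on a manifold `M`, `V` plays the role of the
`C^∞(M)`-module of smooth vector fields on `M` (with its Lie bracket), and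
`D X f` represents the directional derivative of the function `f` along the
vector field `X`.
-/
structure SmoothSetting (F V : Type*) [CommRing F] [Algebra ℝ F]
    [LieRing V] [Module F V] [Module ℝ V] [IsScalarTower ℝ F V] where
  D : V → F → F
  D_add : ∀ (X : V) (f g : F), D X (f + g) = D X f + D X g
  D_mul : ∀ (X : V) (f g : F), D X (f * g) = f * D X g + g * D X f
  D_addX : ∀ (X Y : V) (f : F), D (X + Y) f = D X f + D Y f
  D_smulX : ∀ (f : F) (X : V) (k : F), D (f • X) k = f * D X k
  D_bracket : ∀ (X Y : V) (f : F), D ⁅X, Y⁆ f = D X (D Y f) - D Y (D X f)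
  bracket_smul : ∀ (f : F) (X Y : V), ⁅X, f • Y⁆ = f • ⁅X, Y⁆ + D X f • Y

/-- An almost contact metric manifold, modelled abstractly: a quadruple
`(φ, ξ, η, g)` where `φ` is a `(1,1)`-tensor field, `ξ` a vector field, `η` a
one-form and `g` a Riemannian metric, satisfying `φ² = -Id + η ⊗ ξ`,
`η(ξ) = 1` and `g(φX, φY) = g(X,Y) - η(X)η(Y)`, together with the Levi-Civita
connection `nabla` of `g` (characterised by metricity and torsion-freeness). -/
structure ACMS (F V : Type*) [CommRing F] [PartialOrder F] [Algebra ℝ F]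
    [LieRing V] [Module F V] [Module ℝ V] [IsScalarTower ℝ F V]
    extends SmoothSetting F V where
  phi : V → V
  xi : V
  eta : V → F
  g : V → V → F
  phi_add : ∀ X Y : V, phi (X + Y) = phi X + phi Y
  phi_smul : ∀ (f : F) (X : V), phi (f • X) = f • phi X
  eta_add : ∀ X Y : V, eta (X + Y) = eta X + eta Y
  eta_smul : ∀ (f : F) (X : V), eta (f • X) = f * eta X
  g_addX : ∀ X Y Z : V, g (X + Y) Z = g X Z + g Y Z
  g_smulX : ∀ (f : F) (X Y : V), g (f • X) Y = f * g X Y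
  g_symm : ∀ X Y : V, g X Y = g Y X
  g_nondeg : ∀ X : V, (∀ Y : V, g X Y = 0) → X = 0
  g_pos : ∀ X : V, 0 ≤ g X X
  phi_phi : ∀ X : V, phi (phi X) = -X + eta X • xi
  eta_xi : eta xi = 1
  phi_xi : phi xi = 0
  eta_phi : ∀ X : V, eta (phi X) = 0
  g_phi_phi : ∀ X Y : V, g (phi X) (phi Y) = g X Y - eta X * eta Y
  nabla : V → V → V
  nabla_addX : ∀ X Y Z : V, nabla (X + Y) Z = nabla X Z + nabla Y Z
  nabla_smulX : ∀ (f : F) (X Y : V), nabla (f • X) Y = f • nabla X Y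
  nabla_addY : ∀ X Y Z : V, nabla X (Y + Z) = nabla X Y + nabla X Z
  nabla_leibniz : ∀ (X : V) (f : F) (Y : V),
    nabla X (f • Y) = D X f • Y + f • nabla X Y
  nabla_torsion_free : ∀ X Y : V, nabla X Y - nabla Y X = ⁅X, Y⁆
  nabla_metric : ∀ X Y Z : V,
    D X (g Y Z) = g (nabla X Y) Z + g Y (nabla X Z)

namespace ACMS

variable {F V : Type*} [CommRing F] [PartialOrder F] [Algebra ℝ F]
  [LieRing V] [Module F V] [Module ℝ V] [IsScalarTower ℝ F V]
variable (A : ACMS F V)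

/-- The fundamental form `Φ(X,Y) = g(X, φY)`. -/
def Phi (X Y : V) : F := A.g X (A.phi Y)

/-- The exterior derivative `dη`, via the coboundary formula
`2 dη(X,Y) = X η(Y) - Y η(X) - η([X,Y])`. -/
def dEta (X Y : V) : F :=
  ((1:ℝ)/2) • (A.D X (A.eta Y) - A.D Y (A.eta X) - A.eta ⁅X, Y⁆)

/-- The exterior derivative `dΦ`, via the coboundary formula. -/
def dPhi (X Y Z : V) : F :=
  ((1:ℝ)/3) • (A.D X (A.Phi Y Z) + A.D Y (A.Phi Z X) + A.D Z (A.Phi X Y)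
    - A.Phi ⁅X, Y⁆ Z - A.Phi ⁅Y, Z⁆ X - A.Phi ⁅Z, X⁆ Y)

/-- The Lie derivative `(L_ξ η)(X)`. -/
def lieEta (X : V) : F := A.D A.xi (A.eta X) - A.eta ⁅A.xi, X⁆

/-- The Lie derivative `(L_ξ g)(X,Y)`. -/
def lieG (X Y : V) : F :=
  A.D A.xi (A.g X Y) - A.g ⁅A.xi, X⁆ Y - A.g X ⁅A.xi, Y⁆

/-- The Lie derivative `(L_ξ Φ)(X,Y)`. -/
def liePhiForm (X Y : V) : F :=
  A.D A.xi (A.Phi X Y) - A.Phi ⁅A.xi, X⁆ Y - A.Phi X ⁅A.xi, Y⁆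

/-- The Lie derivative `(L_ξ φ)(X)`. -/
def liePhi (X : V) : V := ⁅A.xi, A.phi X⁆ - A.phi ⁅A.xi, X⁆

/-- The tensor field `h = (1/2) L_ξ φ`. -/
def h (X : V) : V := ((1:ℝ)/2) • A.liePhi X

/-- The Nijenhuis torsion `[φ,φ](X,Y)`. -/
def nijPhi (X Y : V) : V :=
  A.phi (A.phi ⁅X, Y⁆) + ⁅A.phi X, A.phi Y⁆
    - A.phi ⁅A.phi X, Y⁆ - A.phi ⁅X, A.phi Y⁆

/-- The tensor `N⁽¹⁾(X,Y) = [φ,φ](X,Y) + 2 dη(X,Y) ξ`. -/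
def N1 (X Y : V) : V := A.nijPhi X Y + (2 * A.dEta X Y) • A.xi

/-- The tensor `N⁽²⁾(X,Y) = (L_{φX} η)(Y) - (L_{φY} η)(X)`. -/
def N2 (X Y : V) : F :=
  (A.D (A.phi X) (A.eta Y) - A.eta ⁅A.phi X, Y⁆)
    - (A.D (A.phi Y) (A.eta X) - A.eta ⁅A.phi Y, X⁆)

/-- The covariant derivative `(∇_X φ)(Y)`. -/
def covPhi (X Y : V) : V := A.nabla X (A.phi Y) - A.phi (A.nabla X Y)

/-- The covariant derivative `(∇_X η)(Y)`. -/
def covEta (X Y : V) : F := A.D X (A.eta Y) - A.eta (A.nabla X Y)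

/-- `M` is `η`-normal: `N⁽¹⁾(X,Y) = 0` whenever `η(X) = η(Y) = 0`. -/
def EtaNormal : Prop := ∀ X Y : V, A.eta X = 0 → A.eta Y = 0 → A.N1 X Y = 0

/-- `M` is normal: `N⁽¹⁾ = 0` identically. -/
def Normal : Prop := ∀ X Y : V, A.N1 X Y = 0

/-- `M` is a CR-manifold: for all `X, Y` with `η(X) = η(Y) = 0` there is `Z`
with `η(Z) = 0` and `[X - iφX, Y - iφY] = Z - iφZ` (stated here via its real
and imaginary parts). -/
def IsCR : Prop := ∀ X Y : V, A.eta X = 0 → A.eta Y = 0 →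
  ∃ Z : V, A.eta Z = 0 ∧ ⁅X, Y⁆ - ⁅A.phi X, A.phi Y⁆ = Z ∧
    ⁅A.phi X, Y⁆ + ⁅X, A.phi Y⁆ = A.phi Z

/-- `Dc` is a linear connection on `M`. -/
def IsConnection (Dc : V → V → V) : Prop :=
  (∀ X Y Z : V, Dc (X + Y) Z = Dc X Z + Dc Y Z) ∧
  (∀ (f : F) (X Y : V), Dc (f • X) Y = f • Dc X Y) ∧
  (∀ X Y Z : V, Dc X (Y + Z) = Dc X Y + Dc X Z) ∧
  (∀ (X : V) (f : F) (Y : V), Dc X (f • Y) = A.D X f • Y + f • Dc X Y)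

/-- `Dc` is a parallelization: a linear connection making the whole almost
contact metric structure parallel, `∇̃φ = 0`, `∇̃ξ = 0`, `∇̃η = 0`, `∇̃g = 0`. -/
def IsParallelization (Dc : V → V → V) : Prop :=
  A.IsConnection Dc ∧
  (∀ X Y : V, Dc X (A.phi Y) = A.phi (Dc X Y)) ∧
  (∀ X : V, Dc X A.xi = 0) ∧
  (∀ X Y : V, A.D X (A.eta Y) = A.eta (Dc X Y)) ∧
  (∀ X Y Z : V, A.D X (A.g Y Z) = A.g (Dc X Y) Z + A.g Y (Dc X Z))

end ACMS

section Helpers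
set_option linter.unusedSectionVars false

variable {F V : Type*} [CommRing F] [PartialOrder F] [Algebra ℝ F]
  [LieRing V] [Module F V] [Module ℝ V] [IsScalarTower ℝ F V]
variable (A : ACMS F V)

/-- The element `1/2` of `F`. -/
noncomputable def haf : F := (algebraMap ℝ F) ((1:ℝ)/2)

lemma haf_two : (2:F) * (haf : F) = 1 := by
  rw [haf, ← map_ofNat (algebraMap ℝ F) 2, ← map_mul]
  norm_num

lemma smul_haf (x : F) : ((1:ℝ)/2) • x = (haf : F) * x := by
  rw [haf, Algebra.smul_def]

lemma smul_haf_V (v : V) : ((1:ℝ)/2) • v = (haf : F) • v := by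
  rw [haf, algebraMap_smul]

namespace ACMS

lemma Dzero (X : V) : A.D X (0:F) = 0 := by
  have h := A.D_add X 0 0
  rw [add_zero] at h
  linear_combination -h

lemma Dneg (X : V) (f : F) : A.D X (-f) = - A.D X f := by
  have h := A.D_add X f (-f)
  rw [add_neg_cancel, A.Dzero] at h
  linear_combination -h

lemma Dsub (X : V) (f k : F) : A.D X (f - k) = A.D X f - A.D X k := by
  rw [sub_eq_add_neg, A.D_add, A.Dneg, sub_eq_add_neg]

lemma phi_zero : A.phi 0 = 0 := by
  have h := A.phi_add 0 0
  rw [add_zero] at h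
  exact (left_eq_add.mp h)

lemma phi_neg (X : V) : A.phi (-X) = - A.phi X := by
  have h := A.phi_add X (-X)
  rw [add_neg_cancel, A.phi_zero] at h
  exact (neg_eq_of_add_eq_zero_right h.symm).symm

lemma phi_sub (X Y : V) : A.phi (X - Y) = A.phi X - A.phi Y := by
  rw [sub_eq_add_neg, A.phi_add, A.phi_neg, sub_eq_add_neg]

lemma eta_zero : A.eta 0 = 0 := by
  have h := A.eta_add 0 0
  rw [add_zero] at h
  linear_combination -h

lemma eta_neg (X : V) : A.eta (-X) = - A.eta X := by
  have h := A.eta_add X (-X)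
  rw [add_neg_cancel, A.eta_zero] at h
  linear_combination -h

lemma eta_sub (X Y : V) : A.eta (X - Y) = A.eta X - A.eta Y := by
  rw [sub_eq_add_neg, A.eta_add, A.eta_neg, sub_eq_add_neg]

lemma g_zeroX (Y : V) : A.g 0 Y = 0 := by
  have h := A.g_addX 0 0 Y
  rw [add_zero] at h
  linear_combination -h

lemma g_negX (X Y : V) : A.g (-X) Y = - A.g X Y := by
  have h := A.g_addX X (-X) Y
  rw [add_neg_cancel, A.g_zeroX] at h
  linear_combination -h

lemma g_subX (X Y Z : V) : A.g (X - Y) Z = A.g X Z - A.g Y Z := by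
  rw [sub_eq_add_neg, A.g_addX, A.g_negX, sub_eq_add_neg]

lemma g_addY (X Y Z : V) : A.g X (Y + Z) = A.g X Y + A.g X Z := by
  rw [A.g_symm, A.g_addX, A.g_symm Y X, A.g_symm Z X]

lemma g_smulY (f : F) (X Y : V) : A.g X (f • Y) = f * A.g X Y := by
  rw [A.g_symm, A.g_smulX, A.g_symm]

lemma g_negY (X Y : V) : A.g X (-Y) = - A.g X Y := by
  rw [A.g_symm, A.g_negX, A.g_symm]

lemma g_subY (X Y Z : V) : A.g X (Y - Z) = A.g X Y - A.g X Z := by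
  rw [A.g_symm, A.g_subX, A.g_symm Y X, A.g_symm Z X]

lemma g_xiX (X : V) : A.g A.xi X = A.eta X := by
  have h := A.g_phi_phi A.xi X
  rw [A.phi_xi, A.g_zeroX, A.eta_xi, one_mul] at h
  linear_combination -h

lemma g_xiY (X : V) : A.g X A.xi = A.eta X := by
  rw [A.g_symm, A.g_xiX]

lemma g_phi_skew (X Y : V) : A.g (A.phi X) Y = - A.g X (A.phi Y) := by
  have h := A.g_phi_phi (A.phi X) Y
  rw [A.eta_phi, zero_mul, sub_zero] at h
  rw [A.phi_phi X, A.g_addX, A.g_negX, A.g_smulX, A.g_xiX, A.eta_phi, mul_zero] at h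
  linear_combination -h

lemma bracket_smulX (f : F) (X Y : V) :
    ⁅f • X, Y⁆ = f • ⁅X, Y⁆ - A.D Y f • X := by
  rw [← lie_skew, A.bracket_smul, ← lie_skew X Y, smul_neg, neg_add]
  abel


lemma g_hX (X Y : V) : A.g (A.h X) Y =
    haf * (A.g ⁅A.xi, A.phi X⁆ Y - A.g (A.phi ⁅A.xi, X⁆) Y) := by
  simp only [ACMS.h, ACMS.liePhi]
  rw [smul_haf_V (F := F), A.g_smulX, A.g_subX]

lemma eta_h (X : V) : A.eta (A.h X) = haf * A.eta ⁅A.xi, A.phi X⁆ := by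
  simp only [ACMS.h, ACMS.liePhi]
  rw [smul_haf_V (F := F), A.eta_smul, A.eta_sub, A.eta_phi, sub_zero]

lemma liePhiForm_phi_phi (Y Z : V) :
    A.liePhiForm (A.phi Y) (A.phi Z) =
      A.D A.xi (A.g Y (A.phi Z)) + A.g ⁅A.xi, A.phi Y⁆ Z
        - A.eta Z * A.eta ⁅A.xi, A.phi Y⁆
        - A.g Y ⁅A.xi, A.phi Z⁆ + A.eta Y * A.eta ⁅A.xi, A.phi Z⁆ := by
  have e1 : A.g (A.phi Y) (A.phi (A.phi Z)) = A.g Y (A.phi Z) := by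
    rw [A.phi_phi Z, A.g_addY, A.g_negY, A.g_smulY, A.g_xiY, A.eta_phi, mul_zero, add_zero]
    linear_combination -A.g_phi_skew Y Z
  have e2 : A.g ⁅A.xi, A.phi Y⁆ (A.phi (A.phi Z)) =
      - A.g ⁅A.xi, A.phi Y⁆ Z + A.eta Z * A.eta ⁅A.xi, A.phi Y⁆ := by
    rw [A.phi_phi Z, A.g_addY, A.g_negY, A.g_smulY, A.g_xiY]
  have e3 := A.g_phi_phi Y ⁅A.xi, A.phi Z⁆
  simp only [ACMS.liePhiForm, ACMS.Phi]
  rw [e1, e2, e3]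
  ring

lemma main_core (Y Z : V) (h1 : A.eta Z * A.eta ⁅A.xi, A.phi Y⁆ = 0)
    (h2 : A.eta Y * A.eta ⁅A.xi, A.phi Z⁆ = 0) :
    A.g (A.h Y) Z - A.g (A.h Z) Y =
      -(((1:ℝ)/2) • A.liePhiForm Y Z)
        + ((1:ℝ)/2) • A.liePhiForm (A.phi Y) (A.phi Z) := by
  rw [smul_haf, smul_haf, A.liePhiForm_phi_phi, h1, h2, A.g_hX Y Z, A.g_hX Z Y]
  simp only [ACMS.liePhiForm, ACMS.Phi]
  linear_combination (haf : F) * (A.g_symm (A.phi ⁅A.xi, Z⁆) Y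
    - A.g_symm ⁅A.xi, A.phi Z⁆ Y - A.g_phi_skew ⁅A.xi, Y⁆ Z)

lemma liePhi_phi_phi (X : V) : A.liePhi (A.phi (A.phi X)) = - A.liePhi X := by
  simp only [ACMS.liePhi]
  rw [A.phi_phi X]
  simp only [A.phi_add, A.phi_neg, A.phi_smul, A.phi_xi, A.phi_zero, smul_zero,
    add_zero, zero_add, neg_zero, lie_add, lie_neg, A.bracket_smul, lie_self]
  abel

lemma h_phi_phi (X : V) : A.h (A.phi (A.phi X)) = - A.h X := by
  simp only [ACMS.h, A.liePhi_phi_phi, smul_neg]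

lemma eta_h_zero (hc : ∀ X : V, A.h (A.phi X) + A.phi (A.h X) = 0) (X : V) :
    A.eta (A.h X) = 0 := by
  have h1 : A.h (A.phi X) = - A.phi (A.h X) := eq_neg_of_add_eq_zero_left (hc X)
  have h2 := hc (A.phi X)
  rw [A.h_phi_phi X, h1, A.phi_neg, A.phi_phi (A.h X)] at h2
  have h3 : A.eta (A.h X) • A.xi = 0 := by
    rw [neg_add, neg_neg, ← add_assoc, neg_add_cancel, zero_add, neg_eq_zero] at h2
    exact h2
  have h7 : A.g (A.eta (A.h X) • A.xi) A.xi = 0 := by rw [h3, A.g_zeroX]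
  rw [A.g_smulX, A.g_xiX, A.eta_xi, mul_one] at h7
  exact h7

lemma eta_lie_phi (hc : ∀ X : V, A.h (A.phi X) + A.phi (A.h X) = 0) (X : V) :
    A.eta ⁅A.xi, A.phi X⁆ = 0 := by
  have h1 := A.eta_h X
  rw [A.eta_h_zero hc X] at h1
  linear_combination (-2:F) * h1 - A.eta ⁅A.xi, A.phi X⁆ * (haf_two (F := F))

lemma etaN (hn : A.EtaNormal) {X W : V} (hX : A.eta X = 0) (hW : A.eta W = 0) :
    A.eta ⁅A.phi X, A.phi W⁆ = A.eta ⁅X, W⁆ := by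
  have h := hn X W hX hW
  have h2 := congrArg A.eta h
  simp only [ACMS.N1, ACMS.nijPhi, ACMS.dEta, smul_haf, A.eta_add, A.eta_sub,
    A.eta_smul, A.eta_phi, A.eta_xi, hX, hW, A.Dzero, A.eta_zero, mul_one,
    zero_add, add_zero, sub_zero, zero_sub, mul_neg] at h2
  linear_combination h2 + A.eta ⁅X, W⁆ * (haf_two (F := F))

lemma kernel_E (hn : A.EtaNormal) {Y Z : V} (hY : A.eta Y = 0) (hZ : A.eta Z = 0) :
    A.eta ⁅A.phi Y, Z⁆ + A.eta ⁅Y, A.phi Z⁆ = 0 := by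
  have h := A.etaN hn (A.eta_phi Y) hZ
  rw [A.phi_phi Y, hY, zero_smul, add_zero, neg_lie, A.eta_neg] at h
  linear_combination -h

lemma E_zero (hn : A.EtaNormal) (hc : ∀ X : V, A.h (A.phi X) + A.phi (A.h X) = 0)
    (Y Z : V) :
    A.D (A.phi Y) (A.eta Z) - A.D (A.phi Z) (A.eta Y)
      - A.eta ⁅A.phi Y, Z⁆ - A.eta ⁅Y, A.phi Z⁆ = 0 := by
  set Y0 := Y - A.eta Y • A.xi with hY0
  set Z0 := Z - A.eta Z • A.xi with hZ0
  have eY0 : A.eta Y0 = 0 := by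
    rw [hY0, A.eta_sub, A.eta_smul, A.eta_xi, mul_one, sub_self]
  have eZ0 : A.eta Z0 = 0 := by
    rw [hZ0, A.eta_sub, A.eta_smul, A.eta_xi, mul_one, sub_self]
  have pY : A.phi Y0 = A.phi Y := by
    rw [hY0, A.phi_sub, A.phi_smul, A.phi_xi, smul_zero, sub_zero]
  have pZ : A.phi Z0 = A.phi Z := by
    rw [hZ0, A.phi_sub, A.phi_smul, A.phi_xi, smul_zero, sub_zero]
  have exiY : A.eta ⁅A.phi Y, A.xi⁆ = 0 := by
    rw [← lie_skew, A.eta_neg, A.eta_lie_phi hc Y, neg_zero]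
  have b1 : A.eta ⁅A.phi Y, Z⁆ = A.eta ⁅A.phi Y0, Z0⁆ + A.D (A.phi Y) (A.eta Z) := by
    have hZd : Z = Z0 + A.eta Z • A.xi := by rw [hZ0, sub_add_cancel]
    calc A.eta ⁅A.phi Y, Z⁆ = A.eta ⁅A.phi Y, Z0 + A.eta Z • A.xi⁆ := by rw [← hZd]
      _ = A.eta ⁅A.phi Y, Z0⁆ + (A.eta Z * A.eta ⁅A.phi Y, A.xi⁆
            + A.D (A.phi Y) (A.eta Z) * A.eta A.xi) := by
          rw [lie_add, A.eta_add, A.bracket_smul, A.eta_add, A.eta_smul, A.eta_smul]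
      _ = A.eta ⁅A.phi Y0, Z0⁆ + A.D (A.phi Y) (A.eta Z) := by
          rw [pY, exiY, mul_zero, zero_add, A.eta_xi, mul_one]
  have b2 : A.eta ⁅Y, A.phi Z⁆ = A.eta ⁅Y0, A.phi Z0⁆ - A.D (A.phi Z) (A.eta Y) := by
    have hYd : Y = Y0 + A.eta Y • A.xi := by rw [hY0, sub_add_cancel]
    calc A.eta ⁅Y, A.phi Z⁆ = A.eta ⁅Y0 + A.eta Y • A.xi, A.phi Z⁆ := by rw [← hYd]
      _ = A.eta ⁅Y0, A.phi Z⁆ + (A.eta Y * A.eta ⁅A.xi, A.phi Z⁆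
            - A.D (A.phi Z) (A.eta Y) * A.eta A.xi) := by
          rw [add_lie, A.eta_add, A.bracket_smulX, A.eta_sub, A.eta_smul, A.eta_smul]
      _ = A.eta ⁅Y0, A.phi Z0⁆ - A.D (A.phi Z) (A.eta Y) := by
          rw [pZ, A.eta_lie_phi hc Z, mul_zero, zero_sub, A.eta_xi, mul_one]
          ring
  have k := A.kernel_E hn eY0 eZ0
  linear_combination -b1 - b2 - k

lemma covPhi_skew_sum (X Y Z : V) :
    A.g (A.nabla X (A.phi Y)) Z - A.g (A.phi (A.nabla X Y)) Z
      + A.g (A.nabla X (A.phi Z)) Y - A.g (A.phi (A.nabla X Z)) Y = 0 := by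
  have m1 := A.nabla_metric X (A.phi Y) Z
  have m2 := A.nabla_metric X Y (A.phi Z)
  have m3 : A.D X (A.g (A.phi Y) Z) = - A.D X (A.g Y (A.phi Z)) := by
    rw [A.g_phi_skew Y Z, A.Dneg]
  linear_combination -m1 - m2 + m3 - A.g_phi_skew (A.nabla X Z) Y
    - A.g_phi_skew (A.nabla X Y) Z - A.g_symm Y (A.nabla X (A.phi Z))
    - A.g_symm (A.phi Y) (A.nabla X Z)

lemma S_eq (X W : V) :
    A.g (A.nabla X A.xi) W = A.D X (A.eta W) - A.eta (A.nabla X W) := by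
  have m := A.nabla_metric X A.xi W
  rw [A.g_xiX W, A.g_xiX (A.nabla X W)] at m
  linear_combination -m

lemma eta_nabla_lie (X Y : V) :
    A.eta (A.nabla X Y) - A.eta (A.nabla Y X) = A.eta ⁅X, Y⁆ := by
  rw [← A.eta_sub, A.nabla_torsion_free]

lemma part3 (hn : A.EtaNormal) (hc : ∀ X : V, A.h (A.phi X) + A.phi (A.h X) = 0)
    (Y Z : V) : A.g (A.covPhi A.xi Y) Z = A.g (A.h Y) Z - A.g (A.h Z) Y := by
  rw [A.g_hX Y Z, A.g_hX Z Y]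
  have t1 := (A.nabla_torsion_free A.xi (A.phi Y)).symm
  have t2 := (A.nabla_torsion_free A.xi Y).symm
  have t3 := (A.nabla_torsion_free A.xi (A.phi Z)).symm
  have t4 := (A.nabla_torsion_free A.xi Z).symm
  rw [t1, t2, t3, t4]
  simp only [ACMS.covPhi, A.phi_sub, A.g_subX]
  have cs := A.covPhi_skew_sum A.xi Y Z
  have Rf : -(A.g (A.nabla (A.phi Y) A.xi) Z) + A.g (A.phi (A.nabla Y A.xi)) Z
      + A.g (A.nabla (A.phi Z) A.xi) Y - A.g (A.phi (A.nabla Z A.xi)) Y = 0 := by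
    have f1 := A.S_eq (A.phi Y) Z
    have f2 := A.S_eq (A.phi Z) Y
    have f3 : A.g (A.phi (A.nabla Y A.xi)) Z = A.eta (A.nabla Y (A.phi Z)) := by
      rw [A.g_phi_skew (A.nabla Y A.xi) Z, A.S_eq Y (A.phi Z), A.eta_phi, A.Dzero,
        zero_sub, neg_neg]
    have f4 : A.g (A.phi (A.nabla Z A.xi)) Y = A.eta (A.nabla Z (A.phi Y)) := by
      rw [A.g_phi_skew (A.nabla Z A.xi) Y, A.S_eq Z (A.phi Y), A.eta_phi, A.Dzero,
        zero_sub, neg_neg]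
    have f5 := A.eta_nabla_lie (A.phi Y) Z
    have f6 := A.eta_nabla_lie Y (A.phi Z)
    have f7 := A.E_zero hn hc Y Z
    linear_combination -f1 + f2 + f3 - f4 + f5 + f6 - f7
  linear_combination (haf : F) * cs - (haf : F) * Rf
    - (A.g (A.nabla A.xi (A.phi Y)) Z - A.g (A.phi (A.nabla A.xi Y)) Z) * (haf_two (F := F))

end ACMS

end Helpers

/-- On any almost contact metric manifold, for all `Y, Z` with
`η(Y) = η(Z) = 0` one has
`g(hY,Z) - g(hZ,Y) = -(1/2)(L_ξΦ)(Y,Z) + (1/2)(L_ξΦ)(φY,φZ)`; if moreover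
`hφ + φh = 0` this identity holds for all vector fields `Y, Z`, and on an
`η`-normal manifold with `hφ + φh = 0` one has
`g((∇_ξφ)Y, Z) = g(hY,Z) - g(hZ,Y)` for all `Y, Z`. -/
theorem h_antisymmetric_part_identity
    {F V : Type*} [CommRing F] [PartialOrder F] [Algebra ℝ F]
    [LieRing V] [Module F V] [Module ℝ V] [IsScalarTower ℝ F V]
    (A : ACMS F V) :
    (∀ Y Z : V, A.eta Y = 0 → A.eta Z = 0 →
      A.g (A.h Y) Z - A.g (A.h Z) Y =
        -(((1:ℝ)/2) • A.liePhiForm Y Z)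
          + ((1:ℝ)/2) • A.liePhiForm (A.phi Y) (A.phi Z)) ∧
    ((∀ X : V, A.h (A.phi X) + A.phi (A.h X) = 0) →
      ∀ Y Z : V, A.g (A.h Y) Z - A.g (A.h Z) Y =
        -(((1:ℝ)/2) • A.liePhiForm Y Z)
          + ((1:ℝ)/2) • A.liePhiForm (A.phi Y) (A.phi Z)) ∧
    (A.EtaNormal → (∀ X : V, A.h (A.phi X) + A.phi (A.h X) = 0) →
      ∀ Y Z : V, A.g (A.covPhi A.xi Y) Z = A.g (A.h Y) Z - A.g (A.h Z) Y) := by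
  refine ⟨?_, ?_, ?_⟩
  · intro Y Z hY hZ
    exact A.main_core Y Z (by rw [hZ, zero_mul]) (by rw [hY, zero_mul])
  · intro hc Y Z
    exact A.main_core Y Z (by rw [A.eta_lie_phi hc, mul_zero])
      (by rw [A.eta_lie_phi hc, mul_zero])
  · intro hn hc Y Z
    exact A.part3 hn hc Y Z
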